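/- Let q be a prime power and m, r, g positive integers, and let C ⊆ F_{q^m}^{gr} be an F_{q^m}-linear code with 1 ≤ dim_{F_{q^m}}(C) ≤ gr − 1. Then C is MSRD for the length partition (g, r) over F_q if and only if its dual code C^⊥ = { d ∈ F_{q^m}^{gr} : c·d = 0 for all c ∈ C } (with respect to the standard inner product c·d = Σ_j c_j d_j) is MSRD for the length partition (g, r) over F_q. -/

import Mathlib

/-!
For the Hamming metric the dual of an MDS code is MDS: an MDS code `C` of dimension `k` maps
onto the coordinates in any `k` positions, so a dual word supported on `k` positions is
orthogonal to a codeword that is an indicator vector on them, which forces it to vanish.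

For the sum-rank metric, a block-diagonal matrix over `F_q` does not increase sum-rank weights,
and for a given `d` an invertible such matrix `Q` (built blockwise from bases adapted to the
kernel of `a ↦ Σ aⱼ dⱼ`) has `wt_H (Q d) ≤ wt_SR d`. If `C` is MSRD, then `(Qᵀ)⁻¹ C` is MDS and its
dual contains `Q d` whenever `d ∈ C^⊥`, so `wt_SR d ≥ wt_H (Q d) ≥ k + 1`. As `C^⊥⊥ = C`, this gives
both directions.
-/

/-- The sum-rank weight of a vector partitioned into blocks of length `r`, over the base
field `Fq`: the sum over blocks of the `Fq`-dimension of the span of the block entries. -/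
noncomputable def wtSR (Fq : Type) {L : Type} [Field Fq] [Field L] [Algebra Fq L]
    {ι : Type} [Fintype ι] {r : ℕ} (c : ι × Fin r → L) : ℕ :=
  ∑ i : ι, Module.finrank Fq
    ↥(Submodule.span Fq (Set.range fun j : Fin r => c (i, j)))

/-- The minimum sum-rank distance of a code (a set of vectors), over the base field
`Fq`, for blocks of length `r`. -/
noncomputable def dSR (Fq : Type) {L : Type} [Field Fq] [Field L] [Algebra Fq L]
    {ι : Type} [Fintype ι] {r : ℕ} (C : Set (ι × Fin r → L)) : ℕ :=
  sInf {w | ∃ c ∈ C, ∃ d ∈ C, c ≠ d ∧ wtSR Fq (c - d) = w}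

open Module Matrix Finset

section Codes

variable {K σ : Type*} [Field K]

def restrictCode (C : Submodule K (σ → K)) (T : Finset σ) : C →ₗ[K] (T → K) :=
  (LinearMap.funLeft K K ((↑) : T → σ)).domRestrict C

theorem restrictCode_eq_zero_iff {C : Submodule K (σ → K)} {T : Finset σ} {c : C} :
    restrictCode C T c = 0 ↔ ∀ i ∈ T, (c : σ → K) i = 0 := by
  simp [restrictCode, funext_iff]

variable [Fintype σ]

theorem exists_ne_zero_forall_mem_eq_zero {C : Submodule K (σ → K)} {T : Finset σ}
    (hT : #T < finrank K C) : ∃ c ∈ C, c ≠ 0 ∧ ∀ i ∈ T, c i = 0 := by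
  have : LinearMap.ker (restrictCode C T) ≠ ⊥ :=
    LinearMap.ker_ne_bot_of_finrank_lt (by simpa using hT)
  obtain ⟨c, hc, hc0⟩ := (Submodule.ne_bot_iff _).1 this
  exact ⟨c, c.2, by simpa using hc0, restrictCode_eq_zero_iff.1 hc⟩

theorem exists_mem_forall_mem_eq {C : Submodule K (σ → K)} {T : Finset σ}
    (hT : #T = finrank K C) (hC : ∀ c ∈ C, (∀ i ∈ T, c i = 0) → c = 0) (y : σ → K) :
    ∃ c ∈ C, ∀ i ∈ T, c i = y i := by
  have hinj : Function.Injective (restrictCode C T) := by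
    rw [← LinearMap.ker_eq_bot, Submodule.eq_bot_iff]
    exact fun c hc => Subtype.ext (hC c c.2 (restrictCode_eq_zero_iff.1 hc))
  obtain ⟨c, hc⟩ := (LinearMap.injective_iff_surjective_of_finrank_eq_finrank
    (by simp [hT])).1 hinj fun i => y i
  exact ⟨c, c.2, fun i hi => congrFun hc ⟨i, hi⟩⟩

variable [DecidableEq σ]

def dualCode (C : Submodule K (σ → K)) : Submodule K (σ → K) :=
  C.dualAnnihilator.comap (dotProductEquiv K σ).toLinearMap

theorem mem_dualCode {C : Submodule K (σ → K)} {d : σ → K} :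
    d ∈ dualCode C ↔ ∀ c ∈ C, c ⬝ᵥ d = 0 := by
  simp [dualCode, dotProduct_comm d]

theorem finrank_dualCode_add_finrank (C : Submodule K (σ → K)) :
    finrank K (dualCode C) + finrank K C = Fintype.card σ := by
  rw [dualCode, Submodule.comap_equiv_eq_map_symm, LinearEquiv.finrank_map_eq, add_comm,
    Subspace.finrank_add_finrank_dualAnnihilator_eq, finrank_fintype_fun_eq_card]

theorem dualCode_dualCode (C : Submodule K (σ → K)) : dualCode (dualCode C) = C := by
  refine (Submodule.eq_of_le_of_finrank_le (fun c hc => mem_dualCode.2 fun d hd => ?_) ?_).symm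
  · rw [dotProduct_comm]
    exact mem_dualCode.1 hd c hc
  · have := finrank_dualCode_add_finrank C
    have := finrank_dualCode_add_finrank (dualCode C)
    omega

theorem mulVec_mem_dualCode_comap {C : Submodule K (σ → K)} {d : σ → K} (hd : d ∈ dualCode C)
    (A : Matrix σ σ K) : A *ᵥ d ∈ dualCode (C.comap Aᵀ.mulVecLin) :=
  mem_dualCode.2 fun c hc => by
    rw [dotProduct_mulVec, ← mulVec_transpose]
    exact mem_dualCode.1 hd _ hc

variable [DecidableEq K]

def IsMDS (C : Submodule K (σ → K)) : Prop :=
  ∀ c ∈ C, c ≠ 0 → Fintype.card σ + 1 ≤ hammingNorm c + finrank K C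

theorem hammingNorm_add_card_le_of_forall_mem_eq_zero {c : σ → K} {T : Finset σ}
    (hc : ∀ i ∈ T, c i = 0) : hammingNorm c + #T ≤ Fintype.card σ := by
  have : hammingNorm c ≤ #Tᶜ := card_le_card fun i hi =>
    mem_compl.2 fun hiT => (mem_filter.1 hi).2 (hc i hiT)
  rw [card_compl] at this
  have := card_le_univ T
  omega

theorem exists_hammingNorm_add_finrank_le {C : Submodule K (σ → K)} (hC : 1 ≤ finrank K C) :
    ∃ c ∈ C, c ≠ 0 ∧ hammingNorm c + finrank K C ≤ Fintype.card σ + 1 := by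
  have : finrank K C ≤ Fintype.card σ := (Submodule.finrank_le C).trans_eq (by simp)
  obtain ⟨T, -, hT⟩ := exists_subset_card_eq (s := (univ : Finset σ)) (n := finrank K C - 1)
    (by rw [card_univ]; omega)
  obtain ⟨c, hc, hc0, hcT⟩ := exists_ne_zero_forall_mem_eq_zero (C := C) (T := T) (by omega)
  have := hammingNorm_add_card_le_of_forall_mem_eq_zero hcT
  exact ⟨c, hc, hc0, by omega⟩

theorem IsMDS.dualCode {C : Submodule K (σ → K)} (hC : IsMDS C) : IsMDS (dualCode C) := by
  intro d hd hd0
  have hdim := finrank_dualCode_add_finrank C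
  by_contra! hlt
  obtain ⟨T, hsupp, hT⟩ := exists_superset_card_eq (s := {i | d i ≠ 0}) (n := finrank K C)
    (by unfold hammingNorm at hlt; omega) (by omega)
  -- no nonzero codeword vanishes on the `k` positions of `T`, so `C` takes every value on `T`
  have hinj : ∀ c ∈ C, (∀ i ∈ T, c i = 0) → c = 0 := fun c hc hcT => by
    by_contra hc0
    have := hC c hc hc0
    have := hammingNorm_add_card_le_of_forall_mem_eq_zero hcT
    omega
  obtain ⟨i, hi⟩ := Function.ne_iff.1 hd0
  obtain ⟨c, hc, hcT⟩ := exists_mem_forall_mem_eq hT hinj (Pi.single i 1)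
  have : c ⬝ᵥ d = Pi.single i 1 ⬝ᵥ d := sum_congr rfl fun j _ => by
    by_cases hj : j ∈ T
    · rw [hcT j hj]
    · have : d j = 0 := by_contra fun h => hj (hsupp (by simpa using h))
      rw [this, mul_zero, mul_zero]
  rw [mem_dualCode.1 hd c hc, single_dotProduct, one_mul] at this
  exact hi this.symm

end Codes

theorem hammingNorm_eq_sum_blocks {ι β M : Type*} [Fintype ι] [Fintype β] [Zero M]
    [DecidableEq M] (c : ι × β → M) : hammingNorm c = ∑ i, hammingNorm fun j => c (i, j) := by
  simp only [hammingNorm, card_filter, Fintype.sum_prod_type]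

def IsBlockDiagonal {ι β R : Type*} [Zero R] (P : Matrix (ι × β) (ι × β) R) : Prop :=
  ∀ p q, p.1 ≠ q.1 → P p q = 0

theorem IsBlockDiagonal.transpose {ι β R : Type*} [Zero R] {P : Matrix (ι × β) (ι × β) R}
    (hP : IsBlockDiagonal P) : IsBlockDiagonal Pᵀ :=
  fun p q h => hP q p (Ne.symm h)

theorem exists_basis_forall_notMem_apply_eq_zero {F V W β : Type*} [Field F] [AddCommGroup V]
    [Module F V] [FiniteDimensional F V] [AddCommGroup W] [Module F W] [Fintype β]
    (hβ : Fintype.card β = finrank F V) (f : V →ₗ[F] W) :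
    ∃ (b : Basis β F V) (S : Finset β), #S ≤ finrank F (LinearMap.range f) ∧
      ∀ j ∉ S, f (b j) = 0 := by
  obtain ⟨W', hW'⟩ := (LinearMap.ker f).exists_isCompl
  have hdim := Submodule.finrank_add_eq_of_isCompl hW'
  have hrank := LinearMap.finrank_range_add_finrank_ker f
  let e : Fin (finrank F (LinearMap.ker f)) ⊕ Fin (finrank F W') ≃ β :=
    finSumFinEquiv.trans (Fintype.equivFinOfCardEq (hβ.trans hdim.symm)).symm
  let b := (((finBasis F _).prod (finBasis F W')).map
    (Submodule.prodEquivOfIsCompl _ _ hW')).reindex e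
  refine ⟨b, univ.map (Function.Embedding.inr.trans e.toEmbedding),
    by rw [card_map, card_univ, Fintype.card_fin]; omega, fun j hj => ?_⟩
  obtain ⟨x | x, rfl⟩ := e.surjective j
  · simp [b]
  · exact absurd (mem_map_of_mem _ (mem_univ x)) hj

section SumRank

variable {F K : Type} [Field F] [Field K] [Algebra F K]

theorem finrank_span_range_le_hammingNorm [DecidableEq K] {β : Type*} [Fintype β]
    (v : β → K) : finrank F (Submodule.span F (Set.range v)) ≤ hammingNorm v := by
  let w : {j // v j ≠ 0} → K := fun j => v j
  have hv : Set.range v ⊆ insert 0 (Set.range w) := by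
    rintro _ ⟨j, rfl⟩
    by_cases h : v j = 0
    · exact Or.inl h
    · exact Or.inr ⟨⟨j, h⟩, rfl⟩
  calc finrank F (Submodule.span F (Set.range v))
      ≤ finrank F (Submodule.span F (Set.range w)) := by
        have := Module.Finite.span_of_finite F (Set.finite_range w)
        exact Submodule.finrank_mono ((Submodule.span_mono hv).trans_eq Submodule.span_insert_zero)
    _ ≤ Fintype.card {j // v j ≠ 0} := finrank_range_le_card w
    _ = hammingNorm v := Fintype.card_subtype _

variable {ι : Type} [Fintype ι] {r : ℕ}

theorem wtSR_le_hammingNorm [DecidableEq K] (c : ι × Fin r → K) :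
    wtSR F c ≤ hammingNorm c := by
  rw [wtSR, hammingNorm_eq_sum_blocks]
  exact sum_le_sum fun i _ => finrank_span_range_le_hammingNorm _

theorem wtSR_map_mulVec_le {P : Matrix (ι × Fin r) (ι × Fin r) F} (hP : IsBlockDiagonal P)
    (c : ι × Fin r → K) : wtSR F (P.map (algebraMap F K) *ᵥ c) ≤ wtSR F c := by
  refine sum_le_sum fun i _ => ?_
  have := Module.Finite.span_of_finite F (Set.finite_range fun j => c (i, j))
  refine Submodule.finrank_mono (Submodule.span_le.2 ?_)
  rintro _ ⟨j, rfl⟩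
  show ∑ q, algebraMap F K (P (i, j) q) * c q ∈ _
  refine Submodule.sum_mem _ fun q _ => ?_
  by_cases hq : i = q.1
  · rw [← Algebra.smul_def]
    exact Submodule.smul_mem _ _ (Submodule.subset_span ⟨q.2, by rw [hq]⟩)
  · rw [hP _ _ hq, map_zero, zero_mul]
    exact zero_mem _

theorem exists_isUnit_hammingNorm_map_mulVec_le [DecidableEq K] {β : Type*} [Fintype β]
    [DecidableEq β] (v : β → K) : ∃ N : Matrix β β F, IsUnit N ∧
      hammingNorm (N.map (algebraMap F K) *ᵥ v) ≤ finrank F (Submodule.span F (Set.range v)) := by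
  obtain ⟨b, S, hS, hb⟩ := exists_basis_forall_notMem_apply_eq_zero
    (finrank_fintype_fun_eq_card F).symm (Fintype.linearCombination F v)
  refine ⟨Matrix.of fun j => b j, linearIndependent_rows_iff_isUnit.1 b.linearIndependent, ?_⟩
  have hN : ∀ j, ((Matrix.of fun j => b j).map (algebraMap F K) *ᵥ v) j =
      Fintype.linearCombination F v (b j) := fun j => by
    simp [mulVec, dotProduct, Fintype.linearCombination_apply, Algebra.smul_def]
  calc hammingNorm _ ≤ #S := card_le_card fun j hj =>
        by_contra fun hjS => (mem_filter.1 hj).2 (by rw [hN, hb j hjS])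
    _ ≤ _ := hS
    _ = _ := by rw [Fintype.range_linearCombination]

theorem dSR_le_wtSR {C : Submodule K (ι × Fin r → K)} {c : ι × Fin r → K} (hc : c ∈ C)
    (hc0 : c ≠ 0) : dSR F (C : Set (ι × Fin r → K)) ≤ wtSR F c :=
  Nat.sInf_le ⟨c, hc, 0, C.zero_mem, hc0, by rw [sub_zero]⟩

theorem exists_wtSR_eq_dSR {C : Submodule K (ι × Fin r → K)} (hC : C ≠ ⊥) :
    ∃ c ∈ C, c ≠ 0 ∧ wtSR F c = dSR F (C : Set (ι × Fin r → K)) := by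
  obtain ⟨c, hc, hc0⟩ := (Submodule.ne_bot_iff C).1 hC
  obtain ⟨a, ha, b, hb, hab, hw⟩ := Nat.sInf_mem (show {w | ∃ a ∈ (C : Set (ι × Fin r → K)),
    ∃ b ∈ (C : Set (ι × Fin r → K)), a ≠ b ∧ wtSR F (a - b) = w}.Nonempty from
    ⟨_, c, hc, 0, C.zero_mem, hc0, rfl⟩)
  exact ⟨a - b, C.sub_mem ha hb, sub_ne_zero.2 hab, hw⟩

variable (F) in
def IsMSRD (C : Submodule K (ι × Fin r → K)) : Prop :=
  ∀ c ∈ C, c ≠ 0 → Fintype.card (ι × Fin r) + 1 ≤ wtSR F c + finrank K C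

variable [DecidableEq ι]

theorem exists_isBlockDiagonal_isUnit_hammingNorm_le [DecidableEq K] (c : ι × Fin r → K) :
    ∃ P : Matrix (ι × Fin r) (ι × Fin r) F, IsBlockDiagonal P ∧ IsUnit P ∧
      hammingNorm (P.map (algebraMap F K) *ᵥ c) ≤ wtSR F c := by
  choose N hN hNc using fun i =>
    exists_isUnit_hammingNorm_map_mulVec_le (F := F) fun j => c (i, j)
  let P := reindex (Equiv.prodComm _ _) (Equiv.prodComm _ _) (blockDiagonal N)
  have hP : ∀ p q, P p q = if p.1 = q.1 then N p.1 p.2 q.2 else 0 := by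
    simp [P, blockDiagonal_apply]
  refine ⟨P, fun p q h => by rw [hP, if_neg h], ?_, ?_⟩
  · rw [isUnit_iff_isUnit_det, det_reindex_self, det_blockDiagonal]
    exact isUnit_iff_ne_zero.2 (prod_ne_zero_iff.2 fun i _ =>
      ((isUnit_iff_isUnit_det _).1 (hN i)).ne_zero)
  · have hblock : ∀ i j, (P.map (algebraMap F K) *ᵥ c) (i, j) =
        ((N i).map (algebraMap F K) *ᵥ fun k => c (i, k)) j := by
      simp [mulVec, dotProduct, Fintype.sum_prod_type, hP, apply_ite (algebraMap F K), ite_mul]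
    rw [hammingNorm_eq_sum_blocks, wtSR]
    exact sum_le_sum fun i _ => by simpa only [hblock] using hNc i

theorem IsMSRD.dualCode {C : Submodule K (ι × Fin r → K)} (hC : IsMSRD F C) :
    IsMSRD F (dualCode C) := by
  classical
  intro d hd hd0
  obtain ⟨P, hPdiag, hPunit, hPd⟩ := exists_isBlockDiagonal_isUnit_hammingNorm_le (F := F) d
  set Q := P.map (algebraMap F K)
  have hQ : IsUnit Q := hPunit.map (algebraMap F K).mapMatrix
  have hQinj : Function.Injective (Q *ᵥ ·) := mulVec_injective_iff_isUnit.2 hQ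
  have hQT : IsUnit Qᵀ := (isUnit_transpose _).2 hQ
  have hQTinj : Function.Injective (Qᵀ *ᵥ ·) := mulVec_injective_iff_isUnit.2 hQT
  have hQTsurj : Function.Surjective (Qᵀ *ᵥ ·) := mulVec_surjective_iff_isUnit.2 hQT
  -- `C' = (Qᵀ)⁻¹ C`
  set C' := C.comap Qᵀ.mulVecLin
  have hk : finrank K C ≤ finrank K C' := by
    conv_lhs => rw [← Submodule.map_comap_eq_of_surjective (f := Qᵀ.mulVecLin) hQTsurj C]
    exact Submodule.finrank_map_le _ _
  have hC' : IsMDS C' := fun x hx hx0 => by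
    have := hC (Qᵀ *ᵥ x) hx (fun h => hx0 (hQTinj (h.trans (mulVec_zero _).symm)))
    have : wtSR F (Qᵀ *ᵥ x) ≤ wtSR F x := by
      simpa only [transpose_map] using wtSR_map_mulVec_le hPdiag.transpose x
    have := wtSR_le_hammingNorm (F := F) x
    omega
  have := hC'.dualCode _ (mulVec_mem_dualCode_comap hd Q)
    (fun h => hd0 (hQinj (h.trans (mulVec_zero _).symm)))
  have := finrank_dualCode_add_finrank C
  have := finrank_dualCode_add_finrank C'
  omega

theorem dSR_add_finrank_le {C : Submodule K (ι × Fin r → K)} (hC : 1 ≤ finrank K C) :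
    dSR F (C : Set (ι × Fin r → K)) + finrank K C ≤ Fintype.card (ι × Fin r) + 1 := by
  classical
  obtain ⟨c, hc, hc0, hcle⟩ := exists_hammingNorm_add_finrank_le hC
  have := (dSR_le_wtSR (F := F) hc hc0).trans (wtSR_le_hammingNorm c)
  omega

theorem isMSRD_iff_dSR_add_finrank_eq {C : Submodule K (ι × Fin r → K)}
    (hC : 1 ≤ finrank K C) : IsMSRD F C ↔
      dSR F (C : Set (ι × Fin r → K)) + finrank K C = Fintype.card (ι × Fin r) + 1 := by
  have := dSR_add_finrank_le (F := F) hC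
  constructor
  · intro hMSRD
    obtain ⟨c, hc, hc0, hw⟩ := exists_wtSR_eq_dSR (F := F) (Submodule.one_le_finrank_iff.1 hC)
    have := hMSRD c hc hc0
    omega
  · intro h c hc hc0
    have := dSR_le_wtSR (F := F) hc hc0
    omega

theorem isMSRD_iff_natCard_eq [Finite K] {C : Submodule K (ι × Fin r → K)}
    (hC : 1 ≤ finrank K C) : IsMSRD F C ↔ Nat.card C =
      Nat.card K ^ (Fintype.card (ι × Fin r) - dSR F (C : Set (ι × Fin r → K)) + 1) := by
  rw [Module.natCard_eq_pow_finrank (K := K), (Nat.pow_right_injective Finite.one_lt_card).eq_iff,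
    isMSRD_iff_dSR_add_finrank_eq hC]
  have := dSR_add_finrank_le (F := F) hC
  omega

end SumRank

theorem MSRD_iff_dual_MSRD_general
    (q m g r : ℕ)
    (Fq K : Type) [Field Fq] [Field K] [Fintype K] [Algebra Fq K]
    (hcK : Fintype.card K = q ^ m)
    (C : Submodule K (Fin g × Fin r → K))
    (h1 : 1 ≤ Module.finrank K ↥C) (h2 : Module.finrank K ↥C ≤ g * r - 1) :
    (Nat.card ↥C = (q ^ m) ^
        (g * r - dSR Fq ((C : Submodule K (Fin g × Fin r → K)) :
          Set (Fin g × Fin r → K)) + 1)) ↔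
    (Nat.card ↥{d : Fin g × Fin r → K | ∀ c ∈ C, ∑ j, c j * d j = 0}
      = (q ^ m) ^ (g * r -
          dSR Fq {d : Fin g × Fin r → K | ∀ c ∈ C, ∑ j, c j * d j = 0} + 1)) := by
  have hn : Fintype.card (Fin g × Fin r) = g * r := by simp
  have hdual : 1 ≤ finrank K (dualCode C) := by
    have := finrank_dualCode_add_finrank C
    omega
  have hD : {d : Fin g × Fin r → K | ∀ c ∈ C, ∑ j, c j * d j = 0} = dualCode C := by
    ext
    exact mem_dualCode.symm
  rw [hD, SetLike.coe_sort_coe, ← hcK, ← Nat.card_eq_fintype_card, ← hn,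
    ← isMSRD_iff_natCard_eq h1, ← isMSRD_iff_natCard_eq hdual]
  exact ⟨IsMSRD.dualCode, fun h => dualCode_dualCode C ▸ h.dualCode⟩

/-- A linear code `C ⊆ F_{q^m}^{gr}` with `1 ≤ dim C ≤ gr − 1` is MSRD
for the length partition `(g, r)` over `F_q` if and only if its dual code `C^⊥` is
MSRD for the same length partition. -/
theorem MSRD_iff_dual_MSRD
    (q m g r : ℕ) (hq : IsPrimePow q) (hm : 0 < m) (hg : 0 < g) (hr : 0 < r)
    (Fq K : Type) [Field Fq] [Field K] [Fintype Fq] [Fintype K] [Algebra Fq K]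
    (hcq : Fintype.card Fq = q) (hcK : Fintype.card K = q ^ m)
    (C : Submodule K (Fin g × Fin r → K))
    (h1 : 1 ≤ Module.finrank K ↥C) (h2 : Module.finrank K ↥C ≤ g * r - 1) :
    (Nat.card ↥C = (q ^ m) ^
        (g * r - dSR Fq ((C : Submodule K (Fin g × Fin r → K)) :
          Set (Fin g × Fin r → K)) + 1)) ↔
    (Nat.card ↥{d : Fin g × Fin r → K | ∀ c ∈ C, ∑ j, c j * d j = 0}
      = (q ^ m) ^ (g * r -
          dSR Fq {d : Fin g × Fin r → K | ∀ c ∈ C, ∑ j, c j * d j = 0} + 1)) :=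
  MSRD_iff_dual_MSRD_general q m g r Fq K hcK C h1 h2
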